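/- For every quantum channel N, R_g(N) ≤ R_Ω(N); that is, the resource generating power is upper bounded by the free-state-restricted distance to the set of resource-nongenerating channels. -/

import Mathlib

set_option linter.unusedVariables false

noncomputable section

open scoped BigOperators ComplexOrder

/-! ## Basic objects: states and channels -/

/-- Square complex matrices of size `d` (the observables/operators of a `d`-dimensional system). -/
abbrev Mat (d : ℕ) := Matrix (Fin d) (Fin d) ℂ

/-- A quantum state: a positive semidefinite matrix of trace one. -/
def IsState {d : ℕ} (ρ : Mat d) : Prop := ρ.PosSemidef ∧ ρ.trace = 1

/-- Linear maps between matrix algebras. -/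
abbrev MMap (a b : ℕ) := Mat a →ₗ[ℂ] Mat b

/-- The identity channel on an `e`-dimensional system. -/
def idMap (e : ℕ) : MMap e e := LinearMap.id

/-- The `(i,j)` slice of a bipartite matrix, as a linear map. -/
def matSlice {a c : ℕ} (i j : Fin a) :
    Matrix (Fin a × Fin c) (Fin a × Fin c) ℂ →ₗ[ℂ] Mat c where
  toFun X := Matrix.of fun k l => X (i, k) (j, l)
  map_add' _ _ := rfl
  map_smul' _ _ := rfl

/-- Tensor product of matrix maps, on product index types. -/
def tensorAux {a b c d : ℕ} (N : MMap a b) (M : MMap c d) :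
    Matrix (Fin a × Fin c) (Fin a × Fin c) ℂ →ₗ[ℂ]
      Matrix (Fin b × Fin d) (Fin b × Fin d) ℂ where
  toFun X := Matrix.of fun q q' =>
    ∑ p : Fin a × Fin a,
      N (Matrix.single p.1 p.2 1) q.1 q'.1 * M (matSlice p.1 p.2 X) q.2 q'.2
  map_add' X Y := by
    ext q q'
    simp [map_add, Matrix.add_apply, mul_add, Finset.sum_add_distrib]
  map_smul' r X := by
    ext q q'
    simp only [Matrix.of_apply, map_smul, Matrix.smul_apply, smul_eq_mul, RingHom.id_apply,
      Finset.mul_sum]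
    exact Finset.sum_congr rfl fun p _ => by ring

/-- Tensor product `N ⊗ M` of matrix maps. -/
def tensorMap {a b c d : ℕ} (N : MMap a b) (M : MMap c d) : MMap (a * c) (b * d) :=
  (Matrix.reindexLinearEquiv ℂ ℂ finProdFinEquiv finProdFinEquiv).toLinearMap ∘ₗ
    tensorAux N M ∘ₗ
      (Matrix.reindexLinearEquiv ℂ ℂ finProdFinEquiv.symm finProdFinEquiv.symm).toLinearMap

/-- Positive maps: maps preserving positive semidefiniteness. -/
def IsPosMap {a b : ℕ} (N : MMap a b) : Prop :=
  ∀ X : Mat a, X.PosSemidef → (N X).PosSemidef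

/-- Completely positive maps: `N ⊗ id_E` is positive for every ancilla dimension. -/
def IsCP {a b : ℕ} (N : MMap a b) : Prop :=
  IsPosMap N ∧ ∀ e : ℕ, IsPosMap (tensorMap N (idMap e))

/-- Trace-preserving maps. -/
def IsTP {a b : ℕ} (N : MMap a b) : Prop := ∀ X : Mat a, (N X).trace = X.trace

/-- A quantum channel: a completely positive trace-preserving linear map. -/
def IsChannel {a b : ℕ} (N : MMap a b) : Prop := IsCP N ∧ IsTP N

/-- Tensor product of two matrices (Kronecker product, reindexed to `Fin (a*c)`). -/
def tensorState {a c : ℕ} (ρ : Mat a) (σ : Mat c) : Mat (a * c) :=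
  Matrix.reindex finProdFinEquiv finProdFinEquiv (Matrix.kroneckerMap (· * ·) ρ σ)

/-- The `n`-fold tensor power of a matrix map. -/
def chanPow {a b : ℕ} (N : MMap a b) : (n : ℕ) → MMap (a ^ n) (b ^ n)
  | 0 => idMap 1
  | n + 1 => tensorMap (chanPow N n) N

/-- The `n`-fold tensor power of a matrix. -/
def statePow {d : ℕ} (ρ : Mat d) : (n : ℕ) → Mat (d ^ n)
  | 0 => 1
  | n + 1 => tensorState (statePow ρ n) ρ

/-- The trace norm of a matrix, as the sum of its singular values. -/
def traceNorm {d : ℕ} (A : Mat d) : ℝ :=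
  ∑ i, Real.sqrt ((Matrix.isHermitian_conjTranspose_mul_self A).eigenvalues i)

/-- The diamond-norm distance between two matrix maps. -/
def diamondDist {a b : ℕ} (N M : MMap a b) : ℝ :=
  sSup {x : ℝ | ∃ (e : ℕ) (ρ : Mat (a * e)), IsState ρ ∧
    x = traceNorm (tensorMap (N - M) (idMap e) ρ)}

/-! ## State resource theories -/

/-- A distance quantifier: a real number assigned to each pair of equal-dimension matrices. -/
def DQ : Type := ∀ d : ℕ, Mat d → Mat d → ℝ

/-- The defining properties of a distance quantifier: nonnegativity and data processing. -/
structure IsDistanceQuantifier (D : DQ) : Prop where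
  nonneg : ∀ (d : ℕ) (ρ σ : Mat d), IsState ρ → IsState σ → 0 ≤ D d ρ σ
  eq_zero : ∀ (d : ℕ) (ρ σ : Mat d), IsState ρ → IsState σ → ρ = σ → D d ρ σ = 0
  dpi : ∀ (a b : ℕ) (N : MMap a b), IsChannel N → ∀ ρ σ : Mat a,
    IsState ρ → IsState σ → D b (N ρ) (N σ) ≤ D a ρ σ

/-- An assignment of a set of free states to each system. -/
def FreeStates : Type := ∀ d : ℕ, Set (Mat d)

structure IsFreeStates (Ω : FreeStates) : Prop where
  nonempty : ∀ d : ℕ, 0 < d → (Ω d).Nonempty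
  isState : ∀ (d : ℕ) (ω : Mat d), ω ∈ Ω d → IsState ω

/-- Resource-nongenerating channels: `(N ⊗ id_E)(ω)` is free for every free `ω` and ancilla `E`. -/
def RNG (Ω : FreeStates) {a b : ℕ} (N : MMap a b) : Prop :=
  ∀ (e : ℕ) (ω : Mat (a * e)), ω ∈ Ω (a * e) →
    tensorMap N (idMap e) ω ∈ Ω (b * e)

/-- An assignment of a set of free operations between each pair of systems. -/
def FreeOps : Type := ∀ a b : ℕ, Set (MMap a b)

structure IsFreeOps (Ω : FreeStates) (Φ : FreeOps) : Prop where
  channel : ∀ (a b : ℕ) (φ : MMap a b), φ ∈ Φ a b → IsChannel φ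
  maps_free : ∀ (a b : ℕ) (φ : MMap a b), φ ∈ Φ a b → ∀ ω ∈ Ω a, φ ω ∈ Ω b
  tensor_id : ∀ (a b : ℕ) (φ : MMap a b), φ ∈ Φ a b →
    ∀ e : ℕ, tensorMap φ (idMap e) ∈ Φ (a * e) (b * e)

/-- Channel distance induced by a state distance quantifier (maximized over all input
states together with an arbitrary ancilla). -/
def chanDist (D : DQ) {a b : ℕ} (N M : MMap a b) : ℝ :=
  sSup {x : ℝ | ∃ (e : ℕ) (ρ : Mat (a * e)), IsState ρ ∧
    x = D (b * e) (tensorMap N (idMap e) ρ) (tensorMap M (idMap e) ρ)}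

/-- Free-state-restricted channel distance. -/
def chanDistFree (D : DQ) (Ω : FreeStates) {a b : ℕ} (N M : MMap a b) : ℝ :=
  sSup {x : ℝ | ∃ (e : ℕ) (ω : Mat (a * e)), ω ∈ Ω (a * e) ∧
    x = D (b * e) (tensorMap N (idMap e) ω) (tensorMap M (idMap e) ω)}

/-- Distance-based channel resource monotone `R(N) = min_{M ∈ RNG} D(N, M)`. -/
def Rmon (D : DQ) (Ω : FreeStates) {a b : ℕ} (N : MMap a b) : ℝ :=
  sInf {x : ℝ | ∃ M : MMap a b, IsChannel M ∧ RNG Ω M ∧ x = chanDist D N M}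

/-- Free-state-restricted channel resource monotone `R_Ω(N) = min_{M ∈ RNG} D_Ω(N, M)`. -/
def ROmega (D : DQ) (Ω : FreeStates) {a b : ℕ} (N : MMap a b) : ℝ :=
  sInf {x : ℝ | ∃ M : MMap a b, IsChannel M ∧ RNG Ω M ∧ x = chanDistFree D Ω N M}

/-- The state resource monotone induced by a distance quantifier: `μ(ρ) = min_{ω ∈ Ω} D(ρ, ω)`. -/
def muDist (D : DQ) (Ω : FreeStates) (d : ℕ) (ρ : Mat d) : ℝ :=
  sInf {x : ℝ | ∃ ω ∈ Ω d, x = D d ρ ω}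

/-- The resource generating power of a channel, for a state resource measure `μ`. -/
def RgOf (μ : ∀ d : ℕ, Mat d → ℝ) (Ω : FreeStates) {a b : ℕ} (N : MMap a b) : ℝ :=
  sSup {x : ℝ | ∃ (e : ℕ) (ω : Mat (a * e)), ω ∈ Ω (a * e) ∧
    x = μ (b * e) (tensorMap N (idMap e) ω)}

/-- The resource boosting power of a channel, for a state resource measure `μ`. -/
def RbOf (μ : ∀ d : ℕ, Mat d → ℝ) {a b : ℕ} (N : MMap a b) : ℝ :=
  sSup {x : ℝ | ∃ (e : ℕ) (ρ : Mat (a * e)), IsState ρ ∧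
    x = μ (b * e) (tensorMap N (idMap e) ρ) - μ (a * e) ρ}

/-! ## Super-operations and asymptotic rates -/

/-- `N'` is obtained from `N` by a free super-operation `N' = φ₁ ∘ (N ⊗ id) ∘ φ₂`. -/
def IsFreeTransform (Φ : FreeOps) {a b c c' : ℕ} (N : MMap a b) (N' : MMap c c') : Prop :=
  ∃ (e : ℕ) (φ₁ : MMap (b * e) c') (φ₂ : MMap c (a * e)),
    φ₁ ∈ Φ (b * e) c' ∧ φ₂ ∈ Φ c (a * e) ∧
    N' = φ₁ ∘ₗ tensorMap N (idMap e) ∘ₗ φ₂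

/-- `IterComp Φ N M n` : `M` is a sequential composition `Λ₁(N) ∘ ⋯ ∘ Λₙ(N)` of `n`
outputs of free super-operations applied to `N`. -/
inductive IterComp (Φ : FreeOps) {a b : ℕ} (N : MMap a b) :
    ∀ {c c' : ℕ}, MMap c c' → ℕ → Prop
  | single {c c' : ℕ} (N' : MMap c c') : IsFreeTransform Φ N N' → IterComp Φ N N' 1
  | comp {c c' c'' : ℕ} (M : MMap c c') (N' : MMap c' c'') (n : ℕ) :
      IterComp Φ N M n → IsFreeTransform Φ N N' → IterComp Φ N (N' ∘ₗ M) (n + 1)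

/-- A rate `R` is achievable for parallel distillation of `N` into channels from `𝔊`. -/
def DistillAchievable (Φ : FreeOps) {g g' : ℕ} (𝔊 : Set (MMap g g')) {a b : ℕ}
    (N : MMap a b) (R : ℝ) : Prop :=
  ∀ ε : ℝ, 0 < ε → ∃ n₀ : ℕ, ∀ n : ℕ, n₀ ≤ n →
    ∃ G ∈ 𝔊, ∃ N' : MMap (g ^ Nat.floor ((n : ℝ) * R)) (g' ^ Nat.floor ((n : ℝ) * R)),
      IsFreeTransform Φ (chanPow N n) N' ∧
      diamondDist N' (chanPow G (Nat.floor ((n : ℝ) * R))) ≤ ε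

/-- The parallel channel distillation rate. -/
def Rdistill (Φ : FreeOps) {g g' : ℕ} (𝔊 : Set (MMap g g')) {a b : ℕ} (N : MMap a b) : ℝ :=
  sSup {R : ℝ | 0 ≤ R ∧ DistillAchievable Φ 𝔊 N R}

/-- A rate `R` is achievable for parallel dilution of channels from `𝔊` into `N`. -/
def DiluteAchievable (Φ : FreeOps) {g g' : ℕ} (𝔊 : Set (MMap g g')) {a b : ℕ}
    (N : MMap a b) (R : ℝ) : Prop :=
  ∀ ε : ℝ, 0 < ε → ∃ n₀ : ℕ, ∀ n : ℕ, n₀ ≤ n →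
    ∃ G ∈ 𝔊, ∃ N' : MMap (a ^ n) (b ^ n),
      IsFreeTransform Φ (chanPow G (Nat.ceil ((n : ℝ) * R))) N' ∧
      diamondDist N' (chanPow N n) ≤ ε

/-- The parallel channel dilution rate. -/
def Rdilute (Φ : FreeOps) {g g' : ℕ} (𝔊 : Set (MMap g g')) {a b : ℕ} (N : MMap a b) : ℝ :=
  sInf {R : ℝ | 0 ≤ R ∧ DiluteAchievable Φ 𝔊 N R}

/-- A rate `R` is achievable for iterative distillation of `N`. -/
def IterDistillAchievable (Φ : FreeOps) {g g' : ℕ} (𝔊 : Set (MMap g g')) {a b : ℕ}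
    (N : MMap a b) (R : ℝ) : Prop :=
  ∀ ε : ℝ, 0 < ε → ∃ n₀ : ℕ, ∀ n : ℕ, n₀ ≤ n →
    ∃ G ∈ 𝔊, ∃ N' : MMap (g ^ Nat.floor ((n : ℝ) * R)) (g' ^ Nat.floor ((n : ℝ) * R)),
      IterComp Φ N N' n ∧
      diamondDist N' (chanPow G (Nat.floor ((n : ℝ) * R))) ≤ ε

/-- The iterative channel distillation rate. -/
def RdistillIter (Φ : FreeOps) {g g' : ℕ} (𝔊 : Set (MMap g g')) {a b : ℕ} (N : MMap a b) : ℝ :=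
  sSup {R : ℝ | 0 ≤ R ∧ IterDistillAchievable Φ 𝔊 N R}

/-- A rate `R` is achievable for iterative dilution of channels from `𝔊` into `N`. -/
def IterDiluteAchievable (Φ : FreeOps) {g g' : ℕ} (𝔊 : Set (MMap g g')) {a b : ℕ}
    (N : MMap a b) (R : ℝ) : Prop :=
  ∀ ε : ℝ, 0 < ε → ∃ n₀ : ℕ, ∀ n : ℕ, n₀ ≤ n →
    ∃ G ∈ 𝔊, ∃ N' : MMap (a ^ n) (b ^ n),
      IterComp Φ G N' (Nat.ceil ((n : ℝ) * R)) ∧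
      diamondDist N' (chanPow N n) ≤ ε

/-- The iterative channel dilution rate. -/
def RdiluteIter (Φ : FreeOps) {g g' : ℕ} (𝔊 : Set (MMap g g')) {a b : ℕ} (N : MMap a b) : ℝ :=
  sInf {R : ℝ | 0 ≤ R ∧ IterDiluteAchievable Φ 𝔊 N R}

/-- The constant channel that outputs the state `ρm` on every input. -/
def constChan (a : ℕ) {g : ℕ} (ρm : Mat g) : MMap a g where
  toFun X := X.trace • ρm
  map_add' X Y := by simp [Matrix.trace_add, add_smul]
  map_smul' r X := by simp [Matrix.trace_smul, smul_smul]

/-- The asymptotic state distillation rate (towards the maximal resource state `ρm`). -/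
def muDistill (Φ : FreeOps) {g : ℕ} (ρm : Mat g) (d : ℕ) (σ : Mat d) : ℝ :=
  sSup {R : ℝ | 0 ≤ R ∧ ∀ ε : ℝ, 0 < ε → ∃ n₀ : ℕ, ∀ n : ℕ, n₀ ≤ n →
    ∃ φ ∈ Φ (d ^ n) (g ^ Nat.floor ((n : ℝ) * R)),
      traceNorm (φ (statePow σ n) - statePow ρm (Nat.floor ((n : ℝ) * R))) ≤ ε}

/-- The asymptotic state dilution rate (from the maximal resource state `ρm`). -/
def muDilute (Φ : FreeOps) {g : ℕ} (ρm : Mat g) (d : ℕ) (σ : Mat d) : ℝ :=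
  sInf {R : ℝ | 0 ≤ R ∧ ∀ ε : ℝ, 0 < ε → ∃ n₀ : ℕ, ∀ n : ℕ, n₀ ≤ n →
    ∃ φ ∈ Φ (g ^ Nat.ceil ((n : ℝ) * R)) (d ^ n),
      traceNorm (φ (statePow ρm (Nat.ceil ((n : ℝ) * R))) - statePow σ n) ≤ ε}

/-! ## Coherence -/

/-- Incoherent (diagonal) matrices with respect to the computational basis. -/
def IsIncoherent {d : ℕ} (ρ : Mat d) : Prop := ∀ i j : Fin d, i ≠ j → ρ i j = 0

/-- Matrix logarithm via the continuous functional calculus. -/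
def matLog {d : ℕ} (A : Mat d) : Mat d := cfc Real.log A

/-- The quantum relative entropy `S(ρ‖σ) = Tr ρ (log ρ − log σ)`. -/
def relEnt {d : ℕ} (ρ σ : Mat d) : ℝ := ((ρ * (matLog ρ - matLog σ)).trace).re

/-- The relative entropy of coherence `C_r(ρ) = min_{δ incoherent} S(ρ‖δ)`. -/
def Cr {d : ℕ} (ρ : Mat d) : ℝ :=
  sInf {x : ℝ | ∃ δ : Mat d, IsState δ ∧ IsIncoherent δ ∧ x = relEnt ρ δ}

/-- Maximally incoherent operations: channels mapping incoherent states to incoherent states. -/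
def MIO : FreeOps := fun a b =>
  {M | IsChannel M ∧ ∀ δ : Mat a, IsState δ → IsIncoherent δ → IsIncoherent (M δ)}

/-- The coherence generating power of a channel. -/
def Crg {a b : ℕ} (N : MMap a b) : ℝ :=
  sSup {x : ℝ | ∃ (e : ℕ) (δ : Mat (a * e)), IsState δ ∧ IsIncoherent δ ∧
    x = Cr (tensorMap N (idMap e) δ)}

/-- The coherence boosting power of a channel. -/
def Crb {a b : ℕ} (N : MMap a b) : ℝ :=
  sSup {x : ℝ | ∃ (e : ℕ) (ρ : Mat (a * e)), IsState ρ ∧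
    x = Cr (tensorMap N (idMap e) ρ) - Cr ρ}

/-- `C_{r,I}(N)`: the free-state-restricted relative-entropy distance from `N` to MIO. -/
def CrI {a b : ℕ} (N : MMap a b) : ℝ :=
  sInf {x : ℝ | ∃ M : MMap a b, M ∈ MIO a b ∧
    x = sSup {y : ℝ | ∃ (e : ℕ) (δ : Mat (a * e)), IsState δ ∧ IsIncoherent δ ∧
      y = relEnt (tensorMap N (idMap e) δ) (tensorMap M (idMap e) δ)}}

/-- The maximally coherent qubit state `Ψ₂`. -/
def Psi2 : Mat 2 := Matrix.of fun _ _ => (1 / 2 : ℂ)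

/-- The optimal unit resource channel for coherence: the constant channel with output `Ψ₂`. -/
def Gstar : MMap 2 2 := constChan 2 Psi2

/-- The smooth max entropy of channel coherence. -/
def CmaxEps (ε : ℝ) {a b : ℕ} (N : MMap a b) : ℝ :=
  sInf {x : ℝ | ∃ N' : MMap a b, IsChannel N' ∧ diamondDist N N' ≤ ε ∧
    x = Real.log (sInf {l : ℝ | ∃ M ∈ MIO a b, IsCP ((l : ℂ) • M - N')})}

/-!
For a free input `ω` and a resource-nongenerating channel `M`, the output `(M ⊗ id)(ω)` is free,
so `μ((N ⊗ id)(ω)) ≤ D((N ⊗ id)(ω), (M ⊗ id)(ω)) ≤ D_Ω(N, M)`; take the supremum over `ω`, then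
the infimum over `M`.

`R_g` and `D_Ω` are real `sSup`s, which carry junk values on unbounded sets, so the distances must
be bounded: data processing through the measure-and-prepare channel `X ↦ X₀₀ • ρ + X₁₁ • σ`
bounds every `D(ρ, σ)` between states by the distance between `|0⟩⟨0|` and `|1⟩⟨1|`.
-/

open Matrix

lemma Matrix.trace_reindex {m n R : Type*} [Fintype m] [Fintype n] [AddCommMonoid R]
    (e : m ≃ n) (A : Matrix m m R) : (reindex e e A).trace = A.trace :=
  Fintype.sum_equiv e.symm _ _ fun _ => rfl

lemma Matrix.posSemidef_single {n R : Type*} [Ring R] [PartialOrder R] [StarRing R]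
    [StarOrderedRing R] [DecidableEq n] (i : n) {r : R} (hr : 0 ≤ r) :
    (single i i r).PosSemidef := by
  rw [← diagonal_single]
  exact PosSemidef.diagonal (Pi.single_nonneg.2 hr)

lemma isState_single {n : ℕ} (i : Fin n) : IsState (single i i 1 : Mat n) :=
  ⟨posSemidef_single i zero_le_one, trace_single_eq_same i 1⟩

lemma tensorMap_apply {a b c d : ℕ} (N : MMap a b) (M : MMap c d) (X : Mat (a * c)) :
    tensorMap N M X = reindex finProdFinEquiv finProdFinEquiv
      (tensorAux N M (reindex finProdFinEquiv.symm finProdFinEquiv.symm X)) := rfl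

@[simp]
lemma matSlice_apply {a c : ℕ} (i j : Fin a) (X : Matrix (Fin a × Fin c) (Fin a × Fin c) ℂ)
    (k l : Fin c) : matSlice i j X k l = X (i, k) (j, l) := rfl

lemma trace_tensorAux {a b c d : ℕ} (N : MMap a b) (M : MMap c d)
    (X : Matrix (Fin a × Fin c) (Fin a × Fin c) ℂ) :
    (tensorAux N M X).trace =
      ∑ p : Fin a × Fin a, (N (single p.1 p.2 1)).trace * (M (matSlice p.1 p.2 X)).trace := by
  simp only [Matrix.trace, diag, tensorAux, LinearMap.coe_mk, AddHom.coe_mk, of_apply]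
  rw [Finset.sum_comm]
  exact Finset.sum_congr rfl fun p _ => by rw [Finset.sum_mul_sum, Fintype.sum_prod_type]

lemma sum_trace_matSlice {a c : ℕ} (X : Matrix (Fin a × Fin c) (Fin a × Fin c) ℂ) :
    ∑ i, (matSlice i i X).trace = X.trace :=
  (Fintype.sum_prod_type fun q => X q q).symm

lemma IsTP.tensorMap {a b c d : ℕ} {N : MMap a b} {M : MMap c d} (hN : IsTP N) (hM : IsTP M) :
    IsTP (tensorMap N M) := by
  intro X
  rw [tensorMap_apply, trace_reindex, trace_tensorAux, ← trace_reindex finProdFinEquiv.symm X,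
    ← sum_trace_matSlice, Fintype.sum_prod_type]
  refine Finset.sum_congr rfl fun i _ => ?_
  rw [Fintype.sum_eq_single i fun j hj => by
    rw [hN, trace_single_eq_of_ne _ _ _ (Ne.symm hj), zero_mul]]
  rw [hN, hM, trace_single_eq_same, one_mul]

lemma isTP_idMap (e : ℕ) : IsTP (idMap e) := fun _ => rfl

lemma IsChannel.isState_tensorMap_idMap {a b : ℕ} {N : MMap a b} (hN : IsChannel N) {e : ℕ}
    {ρ : Mat (a * e)} (hρ : IsState ρ) : IsState (tensorMap N (idMap e) ρ) :=
  ⟨hN.1.2 e ρ hρ.1, by rw [hN.2.tensorMap (isTP_idMap e), hρ.2]⟩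

def measurePrepare {d : ℕ} (ρ σ : Mat d) : MMap 2 d where
  toFun X := X 0 0 • ρ + X 1 1 • σ
  map_add' X Y := by simp only [Matrix.add_apply, add_smul]; abel
  map_smul' r X := by
    simp only [Matrix.smul_apply, smul_smul, RingHom.id_apply, smul_add, smul_eq_mul]

lemma measurePrepare_apply {d : ℕ} (ρ σ : Mat d) (X : Mat 2) :
    measurePrepare ρ σ X = X 0 0 • ρ + X 1 1 • σ := rfl

lemma tensorAux_measurePrepare_idMap {d e : ℕ} (ρ σ : Mat d)
    (X : Matrix (Fin 2 × Fin e) (Fin 2 × Fin e) ℂ) :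
    tensorAux (measurePrepare ρ σ) (idMap e) X =
      kroneckerMap (· * ·) ρ (X.submatrix (Prod.mk 0) (Prod.mk 0)) +
      kroneckerMap (· * ·) σ (X.submatrix (Prod.mk 1) (Prod.mk 1)) := by
  ext ⟨k, u⟩ ⟨l, v⟩
  simp [tensorAux, idMap, measurePrepare_apply, single, Fintype.sum_prod_type,
    Fin.sum_univ_two]

lemma isChannel_measurePrepare {d : ℕ} {ρ σ : Mat d} (hρ : IsState ρ) (hσ : IsState σ) :
    IsChannel (measurePrepare ρ σ) := by
  refine ⟨⟨fun X hX => ?_, fun e X hX => ?_⟩, fun X => ?_⟩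
  · exact (hρ.1.smul hX.diag_nonneg).add (hσ.1.smul hX.diag_nonneg)
  · have hX' : (reindex finProdFinEquiv.symm finProdFinEquiv.symm X).PosSemidef :=
      hX.submatrix _
    rw [tensorMap_apply, reindex_apply, tensorAux_measurePrepare_idMap]
    exact ((hρ.1.kronecker (hX'.submatrix (Prod.mk 0))).add
      (hσ.1.kronecker (hX'.submatrix (Prod.mk 1)))).submatrix _
  · rw [measurePrepare_apply, trace_add, trace_smul, trace_smul, hρ.2, hσ.2]
    simp [Matrix.trace, Fin.sum_univ_two]

lemma IsDistanceQuantifier.le_single {D : DQ} (hD : IsDistanceQuantifier D) {d : ℕ}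
    {ρ σ : Mat d} (hρ : IsState ρ) (hσ : IsState σ) :
    D d ρ σ ≤ D 2 (single 0 0 1 : Mat 2) (single 1 1 1) := by
  simpa [measurePrepare_apply] using
    hD.dpi 2 d _ (isChannel_measurePrepare hρ hσ) _ _ (isState_single 0) (isState_single 1)

section ResourceTheory

variable {D : DQ} {Ω : FreeStates}

lemma muDist_le (hD : IsDistanceQuantifier D) (hΩ : IsFreeStates Ω) {d : ℕ} {ρ ω : Mat d}
    (hρ : IsState ρ) (hω : ω ∈ Ω d) : muDist D Ω d ρ ≤ D d ρ ω :=
  csInf_le ⟨0, by rintro _ ⟨ω', hω', rfl⟩; exact hD.nonneg _ _ _ hρ (hΩ.isState _ _ hω')⟩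
    ⟨ω, hω, rfl⟩

lemma le_chanDistFree (hD : IsDistanceQuantifier D) (hΩ : IsFreeStates Ω) {a b : ℕ}
    {N M : MMap a b} (hN : IsChannel N) (hM : IsChannel M) {e : ℕ} {ω : Mat (a * e)}
    (hω : ω ∈ Ω (a * e)) :
    D (b * e) (tensorMap N (idMap e) ω) (tensorMap M (idMap e) ω) ≤ chanDistFree D Ω N M := by
  refine le_csSup ⟨D 2 (single 0 0 1) (single 1 1 1), ?_⟩ ⟨e, ω, hω, rfl⟩
  rintro _ ⟨e', ω', hω', rfl⟩
  have hω'State := hΩ.isState _ _ hω'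
  exact hD.le_single (hN.isState_tensorMap_idMap hω'State) (hM.isState_tensorMap_idMap hω'State)

lemma chanDistFree_nonneg (hD : IsDistanceQuantifier D) (hΩ : IsFreeStates Ω) {a b : ℕ}
    {N M : MMap a b} (hN : IsChannel N) (hM : IsChannel M) : 0 ≤ chanDistFree D Ω N M := by
  refine Real.sSup_nonneg ?_
  rintro _ ⟨e, ω, hω, rfl⟩
  have hωState := hΩ.isState _ _ hω
  exact hD.nonneg _ _ _ (hN.isState_tensorMap_idMap hωState) (hM.isState_tensorMap_idMap hωState)

lemma rgOf_muDist_le_chanDistFree (hD : IsDistanceQuantifier D) (hΩ : IsFreeStates Ω) {a b : ℕ}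
    {N M : MMap a b} (hN : IsChannel N) (hM : IsChannel M) (hMfree : RNG Ω M) :
    RgOf (muDist D Ω) Ω N ≤ chanDistFree D Ω N M := by
  refine Real.sSup_le ?_ (chanDistFree_nonneg hD hΩ hN hM)
  rintro _ ⟨e, ω, hω, rfl⟩
  calc muDist D Ω (b * e) (tensorMap N (idMap e) ω)
      ≤ D (b * e) (tensorMap N (idMap e) ω) (tensorMap M (idMap e) ω) :=
        muDist_le hD hΩ (hN.isState_tensorMap_idMap (hΩ.isState _ _ hω)) (hMfree e ω hω)
    _ ≤ chanDistFree D Ω N M := le_chanDistFree hD hΩ hN hM hω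

end ResourceTheory

/-- For every quantum channel `N`, the resource generating power is upper
bounded by the free-state-restricted distance to the set of RNG channels:
`R_g(N) ≤ R_Ω(N)` (with the set of RNG channels assumed nonempty). -/
theorem Rg_le_ROmega
    (D : DQ) (hD : IsDistanceQuantifier D) (Ω : FreeStates) (hΩ : IsFreeStates Ω) :
    ∀ (a b : ℕ) (N : MMap a b), IsChannel N →
      (∃ M : MMap a b, IsChannel M ∧ RNG Ω M) →
      RgOf (muDist D Ω) Ω N ≤ ROmega D Ω N := by
  rintro a b N hN ⟨M₀, hM₀, hM₀free⟩
  refine le_csInf ⟨_, M₀, hM₀, hM₀free, rfl⟩ ?_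
  rintro _ ⟨M, hM, hMfree, rfl⟩
  exact rgOf_muDist_le_chanDistFree hD hΩ hN hM hMfree
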